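/- Let Φ be a real number with Φ² = Φ + 1 and let w = (w₁, …, wₙ) be a nonempty word of integers. Then the (2,1) entry (row 2, column 1) of M(Φ, w) equals E·Φ + G, where E = Σ_{s ≪₃ w} χ(n − |s| − 1) · F_{|s|} · m_s and G = Σ_{s ≪₃ w} χ(n − |s| − 1) · F_{|s|−1} · m_s, the sums ranging over all subwords s of w with s ≪₃ w. -/

import Mathlib

open Matrix

noncomputable section

/-- The matrix `S = !![0, -1; 1, 0]` over `ℝ`. -/
def S : Matrix (Fin 2) (Fin 2) ℝ := !![0, -1; 1, 0]

/-- The matrix `T(λ) = !![1, λ; 0, 1]` over `ℝ`. -/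
def T (lam : ℝ) : Matrix (Fin 2) (Fin 2) ℝ := !![1, lam; 0, 1]

/-- For a nonempty word `w = (w₁, …, wₙ)` of integers,
`M lam w = T(λ)^{w₁} · S · T(λ)^{w₂} · S · ⋯ · S · T(λ)^{wₙ}`. -/
def M (lam : ℝ) : List ℤ → Matrix (Fin 2) (Fin 2) ℝ
  | [] => 1
  | a :: t => T lam ^ a * (t.map fun b => S * T lam ^ b).prod

/-- The 4-periodic function with `χ(0) = 0, χ(1) = 1, χ(2) = 0, χ(3) = -1`
(the nontrivial Dirichlet character mod 4, extended to all integers). -/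
def chi (m : ℤ) : ℤ := if m % 4 = 1 then 1 else if m % 4 = 3 then -1 else 0

/-- The Fibonacci numbers, extended so that `F₋₁ = 1` (the only negative index used). -/
def fibz (m : ℤ) : ℤ := if m < 0 then 1 else (Nat.fib m.toNat : ℤ)

/-- A subword of `(w₁, …, wₙ)` is encoded by its set `J` of (0-based) positions;
the 1-based indices `j₁ < ⋯ < j_m` are the sorted elements of `J` plus one.
`ll3 J` says `jᵢ ≡ i - 1 (mod 2)`, i.e. `s ≪₃ w`, for all `i` (1-based), stated here in 0-based form. -/
def ll3 {n : ℕ} (J : Finset (Fin n)) : Prop :=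
  ∀ i : ℕ, ∀ hi : i < (J.sort (· ≤ ·)).length,
    ((J.sort (· ≤ ·)).get ⟨i, hi⟩).val % 2 = (i + 1) % 2

instance {n : ℕ} : DecidablePred (ll3 (n := n)) := fun _ =>
  Nat.decidableBallLT _ _

/-!
Since `Φ ^ m = F_m Φ + F_{m-1}`, the right-hand side is `∑_{s ≪₃ w} χ(n - |s| - 1) Φ^|s| m_s`,
and this identity holds with `Φ` replaced by any `λ`. Writing `M(λ, w) = -S · ∏ᵢ S T(λ)^{wᵢ}`,
appending a letter `a` to `w` multiplies the product on the right by `S T(λ)^a = !![0, -1; 1, aλ]`,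
so its first row `(x, y)` becomes `(y, -x + aλ y)`. The sums `∑_{s ≪₃ w} χ(n - |s| - k) λ^|s| m_s`
for `k = 1, 0` obey the same recursion: split the subwords of `w a` according to whether they use
the last letter. A subword `s a` with `s ≪₃ w` is itself `≪₃` exactly when `n - |s|` is odd; for
`k = 0` the factor `χ` vanishes otherwise anyway, and for `k = 1` it vanishes on all of them.
-/

open Finset

section Subwords

variable {n : ℕ}

lemma sort_map_castSuccEmb (J : Finset (Fin n)) :
    (J.map Fin.castSuccEmb).sort = J.sort.map Fin.castSucc :=
  (map_sort _ _ _ _ fun _ _ _ _ => Fin.castSucc_le_castSucc_iff.symm).symm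

lemma sort_insert_last_map_castSuccEmb (J : Finset (Fin n)) :
    (insert (Fin.last n) (J.map Fin.castSuccEmb)).sort =
      J.sort.map Fin.castSucc ++ [Fin.last n] := by
  have hpair : (J.sort.map Fin.castSucc ++ [Fin.last n]).Pairwise (· ≤ ·) := by
    simpa [List.pairwise_append, List.pairwise_map] using fun a _ => Fin.le_last (Fin.castSucc a)
  have hnodup : (J.sort.map Fin.castSucc ++ [Fin.last n]).Nodup := by
    simp [List.nodup_append, List.nodup_map_iff (Fin.castSucc_injective n)]
  rw [← (List.toFinset_sort _ hnodup).mpr hpair]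
  congr 1
  ext x
  simp

lemma ll3_map_castSuccEmb (J : Finset (Fin n)) :
    ll3 (J.map Fin.castSuccEmb) ↔ ll3 J := by
  simp [ll3, sort_map_castSuccEmb]

lemma ll3_insert_last_map_castSuccEmb (J : Finset (Fin n)) :
    ll3 (insert (Fin.last n) (J.map Fin.castSuccEmb)) ↔ ll3 J ∧ n % 2 = (#J + 1) % 2 := by
  simp only [ll3, sort_insert_last_map_castSuccEmb, List.get_eq_getElem, List.length_append,
    List.length_map, List.length_cons, List.length_nil, length_sort]
  constructor
  · intro h
    refine ⟨fun i hi => ?_, ?_⟩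
    · simpa [List.getElem_append_left, hi] using h i (by simp at hi ⊢; omega)
    · simpa using h #J (by omega)
  · rintro ⟨h, hlast⟩ i hi
    rcases Nat.lt_succ_iff_lt_or_eq.mp hi with hi | rfl
    · simpa [List.getElem_append_left, hi] using h i (by simpa using hi)
    · simpa using hlast

lemma sum_finset_fin_succ {M : Type*} [AddCommMonoid M] (f : Finset (Fin (n + 1)) → M) :
    ∑ J, f J = ∑ J : Finset (Fin n), f (J.map Fin.castSuccEmb) +
      ∑ J : Finset (Fin n), f (insert (Fin.last n) (J.map Fin.castSuccEmb)) := by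
  have hinj : Set.InjOn (fun J : Finset (Fin n) => J.image Fin.castSuccEmb) Set.univ :=
    (image_injective Fin.castSuccEmb.injective).injOn
  rw [← powerset_univ, Fin.univ_castSuccEmb, cons_eq_insert, sum_powerset_insert (by simp),
    map_eq_image, powerset_image, sum_image (hinj.mono (by simp)), sum_image (hinj.mono (by simp))]
  simp [map_eq_image]

variable {R : Type*}

def ll3Sum [CommSemiring R] (c : ℕ → R) (w : Fin n → R) : R :=
  ∑ J ∈ univ.filter ll3, c #J * ∏ j ∈ J, w j

lemma ll3Sum_fin_zero [CommSemiring R] (c : ℕ → R) (w : Fin 0 → R) : ll3Sum c w = c 0 := by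
  have hfilter : univ.filter (ll3 (n := 0)) = {∅} := by
    ext J
    simp only [mem_filter, mem_univ, true_and, mem_singleton, eq_empty_of_isEmpty J, iff_true]
    simp [ll3]
  rw [ll3Sum, hfilter, sum_singleton]
  simp

lemma ll3Sum_snoc [CommSemiring R] (c : ℕ → R) (w : Fin n → R) (a : R) :
    ll3Sum c (Fin.snoc w a) =
      ll3Sum c w + a * ll3Sum (fun m => if n % 2 = (m + 1) % 2 then c (m + 1) else 0) w := by
  simp only [ll3Sum, sum_filter]
  rw [sum_finset_fin_succ, mul_sum]
  have hlast (J : Finset (Fin n)) : Fin.last n ∉ J.map Fin.castSuccEmb := by simp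
  congr 1 <;> refine sum_congr rfl fun J _ => ?_
  · simp [ll3_map_castSuccEmb]
  · simp only [ll3_insert_last_map_castSuccEmb, card_insert_of_notMem (hlast J),
      prod_insert (hlast J), card_map, prod_map, Fin.coe_castSuccEmb, Fin.snoc_castSucc,
      Fin.snoc_last]
    rw [ite_and]
    split_ifs <;> ring

lemma ll3Sum_mul_left [CommSemiring R] (r : R) (c : ℕ → R) (w : Fin n → R) :
    ll3Sum (fun m => r * c m) w = r * ll3Sum c w := by
  simp [ll3Sum, mul_sum, mul_assoc]

lemma chi_add_two (k : ℤ) : chi (k + 2) = -chi k := by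
  unfold chi; split_ifs <;> omega

lemma chi_eq_zero_of_even {k : ℤ} (h : Even k) : chi k = 0 := by
  obtain ⟨j, rfl⟩ := h
  unfold chi; split_ifs <;> omega

def chiSum [CommRing R] (k : ℤ) (lam : R) (w : Fin n → R) : R :=
  ll3Sum (fun m => (chi (n - m - k) : R) * lam ^ m) w

variable [CommRing R] (lam : R)

lemma chiSum_snoc_one (w : Fin n → R) (a : R) :
    chiSum 1 lam (Fin.snoc w a) = chiSum 0 lam w := by
  have hskip : (fun m : ℕ => (chi ((n + 1 : ℕ) - m - 1) : R) * lam ^ m) =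
      fun m : ℕ => (chi (n - m - 0) : R) * lam ^ m := by
    funext m
    rw [show ((n + 1 : ℕ) : ℤ) - m - 1 = n - m - 0 by push_cast; ring]
  have huse : (fun m : ℕ => if n % 2 = (m + 1) % 2 then
      (chi ((n + 1 : ℕ) - (m + 1 : ℕ) - 1) : R) * lam ^ (m + 1) else 0) = fun _ : ℕ => 0 := by
    funext m
    split_ifs with h
    · rw [chi_eq_zero_of_even (Int.even_iff.mpr (by omega))]
      simp
    · simp
  rw [chiSum, ll3Sum_snoc, hskip, huse]
  simp [chiSum, ll3Sum]

lemma chiSum_snoc_zero (w : Fin n → R) (a : R) :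
    chiSum 0 lam (Fin.snoc w a) = -chiSum 1 lam w + a * lam * chiSum 0 lam w := by
  have hskip : (fun m : ℕ => (chi ((n + 1 : ℕ) - m - 0) : R) * lam ^ m) =
      fun m : ℕ => -1 * ((chi (n - m - 1) : R) * lam ^ m) := by
    funext m
    rw [show ((n + 1 : ℕ) : ℤ) - m - 0 = n - m - 1 + 2 by push_cast; ring, chi_add_two]
    push_cast
    ring
  have huse : (fun m : ℕ => if n % 2 = (m + 1) % 2 then
      (chi ((n + 1 : ℕ) - (m + 1 : ℕ) - 0) : R) * lam ^ (m + 1) else 0) =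
      fun m : ℕ => lam * ((chi (n - m - 0) : R) * lam ^ m) := by
    funext m
    split_ifs with h
    · push_cast
      ring_nf
    · rw [chi_eq_zero_of_even (Int.even_iff.mpr (by omega))]
      simp
  rw [chiSum, ll3Sum_snoc, hskip, huse, ll3Sum_mul_left, ll3Sum_mul_left]
  simp only [chiSum]
  ring

lemma chiSum_fin_zero (k : ℤ) (w : Fin 0 → R) : chiSum k lam w = chi (-k) := by
  simp [chiSum, ll3Sum_fin_zero]

end Subwords

lemma T_zpow (lam : ℝ) (a : ℤ) : T lam ^ a = !![1, a * lam; 0, 1] := by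
  have hT : IsUnit (T lam).det := by simp [T]
  induction a using Int.induction_on with
  | zero => simp [Matrix.one_fin_two]
  | succ k ih =>
    rw [zpow_add_one hT, ih, T, Matrix.mul_fin_two]
    push_cast
    ring_nf
  | pred k ih =>
    rw [zpow_sub_one hT, ih, Matrix.inv_eq_left_inv (B := !![1, -lam; 0, 1]), Matrix.mul_fin_two]
    · push_cast
      ring_nf
    · simp [T, Matrix.one_fin_two]

lemma S_mul_T_zpow (lam : ℝ) (a : ℤ) : S * T lam ^ a = !![0, -1; 1, a * lam] := by
  simp [T_zpow, S]

def wordProd (lam : ℝ) (l : List ℤ) : Matrix (Fin 2) (Fin 2) ℝ :=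
  (l.map fun b => S * T lam ^ b).prod

lemma M_cons (lam : ℝ) (a : ℤ) (t : List ℤ) : M lam (a :: t) = -(S * wordProd lam (a :: t)) := by
  have hS : S * S = -1 := by simp [S, Matrix.one_fin_two]
  simp [M, wordProd, ← mul_assoc, hS]

lemma wordProd_ofFn (lam : ℝ) {n : ℕ} (w : Fin n → ℤ) :
    wordProd lam (List.ofFn w) 0 0 = -chiSum 1 lam (fun j => (w j : ℝ)) ∧
      wordProd lam (List.ofFn w) 0 1 = -chiSum 0 lam (fun j => (w j : ℝ)) := by
  induction w using Fin.snocInduction with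
  | elim0 => simp [wordProd, chiSum_fin_zero, chi]
  | snoc v a ih =>
    have hcast := Fin.comp_snoc (Int.cast : ℤ → ℝ) v a
    simp only [Function.comp_def] at hcast
    have happend : wordProd lam (List.ofFn (Fin.snoc v a)) =
        wordProd lam (List.ofFn v) * (S * T lam ^ a) := by
      rw [List.ofFn_succ']
      simp [wordProd]
    rw [hcast, happend, chiSum_snoc_one, chiSum_snoc_zero, S_mul_T_zpow]
    simp [Matrix.mul_apply, Fin.sum_univ_two, ih.1, ih.2]
    ring

lemma M_ofFn_one_zero (lam : ℝ) {n : ℕ} (hn : 0 < n) (w : Fin n → ℤ) :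
    M lam (List.ofFn w) 1 0 = chiSum 1 lam (fun j => (w j : ℝ)) := by
  obtain ⟨k, rfl⟩ := Nat.exists_eq_add_one_of_ne_zero hn.ne'
  have hcons := List.ofFn_succ (f := w)
  rw [hcons, M_cons, ← hcons, Matrix.neg_apply, Matrix.mul_apply, Fin.sum_univ_two,
    (wordProd_ofFn lam w).1]
  simp [S]

lemma fibz_natCast (m : ℕ) : fibz m = Nat.fib m := by
  simp [fibz]

lemma fibz_add_one (m : ℕ) : fibz (m + 1) = fibz m + fibz (m - 1) := by
  rcases m with _ | m
  · simp [fibz]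
  · rw [show ((m + 1 : ℕ) : ℤ) + 1 = (m + 2 : ℕ) by push_cast; ring,
      show ((m + 1 : ℕ) : ℤ) - 1 = (m : ℕ) by push_cast; ring, fibz_natCast, fibz_natCast,
      fibz_natCast, Nat.fib_add_two]
    push_cast
    ring

lemma pow_eq_fibz_mul_add {Φ : ℝ} (hΦ : Φ ^ 2 = Φ + 1) (m : ℕ) :
    Φ ^ m = fibz m * Φ + fibz (m - 1) := by
  induction m with
  | zero => simp [fibz]
  | succ m ih =>
    rw [pow_succ, ih]
    push_cast
    rw [fibz_add_one, add_sub_cancel_right]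
    push_cast
    linear_combination (fibz m : ℝ) * hΦ

theorem stmt8 (Φ : ℝ) (hΦ : Φ ^ 2 = Φ + 1) (n : ℕ) (hn : 0 < n) (w : Fin n → ℤ) :
    M Φ (List.ofFn w) 1 0 =
      ((∑ J ∈ Finset.univ.filter (fun J : Finset (Fin n) => ll3 J),
          chi ((n : ℤ) - J.card - 1) * fibz (J.card : ℤ) * ∏ j ∈ J, w j : ℤ) : ℝ) * Φ +
      ((∑ J ∈ Finset.univ.filter (fun J : Finset (Fin n) => ll3 J),
          chi ((n : ℤ) - J.card - 1) * fibz ((J.card : ℤ) - 1) * ∏ j ∈ J, w j : ℤ) : ℝ) := by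
  rw [M_ofFn_one_zero Φ hn, chiSum, ll3Sum]
  push_cast
  rw [sum_mul, ← sum_add_distrib]
  refine sum_congr rfl fun J _ => ?_
  rw [pow_eq_fibz_mul_add hΦ]
  ring
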